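/- arXiv:2502.08827 — 2 statements merged into one kernel-verified Lean document; each statement's English description precedes it below -/
import Mathlib

section
/- Every subtree hypergraph with strict vertex preferences over incident hyperedges admits a stable matching. Concretely: if f is a hyperedge whose top vertex r_f is farthest from the root, X_f is the set of hyperedges containing r_f that r_f ranks strictly below f, and M is a stable matching of the hypergraph obtained by deleting X_f ∪ {f}, then M is a stable matching of the original hypergraph whenever M covers r_f, and M ∪ {f} is a stable matching of the original hypergraph whenever M does not cover r_f. -/
/-!
Let `f` be a hyperedge whose top `r_f` is farthest from the root. In a tree, the top of a subtree
lies on the root path of each of its vertices, so if a hyperedge `e` meets `f` in a vertex `v`,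
both tops lie on the root path of `v`, the top of `e` above `r_f`; as `e` contains the segment
from its top to `v`, it contains `r_f`. Hence a stable matching `M` of the smaller hypergraph
either covers `r_f`, and then `r_f` prefers its partner to `f` and to all of `X_f`, so none of
them blocks; or it leaves `r_f` uncovered, and then `f` is disjoint from `M` and can be added,
after which `r_f` prefers `f` to every edge of `X_f`. Induction on the number of hyperedges
gives existence.
-/

open scoped Classical

def IsMatching {V : Type*} [DecidableEq V] (E : Finset (Finset V))
    (M : Finset (Finset V)) : Prop :=
  M ⊆ E ∧ ∀ v : V, (M.filter (fun e => v ∈ e)).card ≤ 1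

def Covers {V : Type*} (M : Finset (Finset V)) (v : V) : Prop :=
  ∃ e ∈ M, v ∈ e

def IsStableMatching {V : Type*} [DecidableEq V] (E : Finset (Finset V))
    (pref : V → Finset V → Finset V → Prop)
    (M : Finset (Finset V)) : Prop :=
  IsMatching E M ∧
    ∀ e ∈ E, e ∉ M → ¬ (∀ v ∈ e, ∀ e' ∈ M, v ∈ e' → pref v e e')

namespace SimpleGraph

variable {V : Type*} {G : SimpleGraph V}

theorem exists_walk_of_induce_preconnected {S : Set V} (hS : (G.induce S).Preconnected)
    {a b : V} (ha : a ∈ S) (hb : b ∈ S) : ∃ w : G.Walk a b, ∀ x ∈ w.support, x ∈ S := by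
  obtain ⟨w⟩ := hS ⟨a, ha⟩ ⟨b, hb⟩
  refine ⟨w.map (Embedding.induce S).toHom, fun x hx => ?_⟩
  obtain ⟨d, -, rfl⟩ := List.mem_map.mp (Walk.support_map _ w ▸ hx)
  exact d.2

theorem IsAcyclic.length_eq_dist (hG : G.IsAcyclic) {u v : V} {p : G.Walk u v}
    (hp : p.IsPath) : p.length = G.dist u v := by
  obtain ⟨q, hq, hlen⟩ := p.reachable.exists_path_of_dist
  obtain rfl : p = q := congrArg Subtype.val ((hG.subsingleton_path u v).elim ⟨p, hp⟩ ⟨q, hq⟩)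
  exact hlen

theorem IsAcyclic.support_subset_of_preconnected (hG : G.IsAcyclic) {S : Set V}
    (hS : (G.induce S).Preconnected) {a b : V} (ha : a ∈ S) (hb : b ∈ S) {p : G.Walk a b}
    (hp : p.IsPath) : ∀ c ∈ p.support, c ∈ S := by
  obtain ⟨w, hw⟩ := exists_walk_of_induce_preconnected hS ha hb
  obtain rfl : p = w.bypass :=
    congrArg Subtype.val ((hG.subsingleton_path a b).elim ⟨p, hp⟩ ⟨_, w.bypass_isPath⟩)
  exact fun c hc => hw c (w.support_bypass_subset_support hc)

theorem IsAcyclic.eq_concat_or_eq_concat (hG : G.IsAcyclic) {r x y : V} {p : G.Walk r x}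
    {q : G.Walk r y} (hp : p.IsPath) (hq : q.IsPath) (h : G.Adj x y) :
    q = p.concat h ∨ p = q.concat h.symm := by
  by_cases hx : x ∈ q.support
  · exact Or.inl (hG.path_concat hp hq h hx)
  · exact Or.inr (hG.path_concat hq hp h.symm
      (hG.mem_support_of_ne_mem_support_of_adj_of_isPath hp hq h hx))

theorem IsAcyclic.mem_support_of_walk_dist_le (hG : G.IsAcyclic) {r v t : V} (w : G.Walk v t)
    (hw : ∀ x ∈ w.support, G.dist r t ≤ G.dist r x) {p : G.Walk r v} (hp : p.IsPath) :
    t ∈ p.support := by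
  induction w with
  | nil => exact p.end_mem_support
  | @cons v y t h w ih =>
    have hq := (p.concat h).bypass_isPath
    have ht_q := ih (fun x hx => hw x (List.mem_cons_of_mem _ hx)) hq
    rcases hG.eq_concat_or_eq_concat hp hq h with hqp | hpq
    · rw [hqp, Walk.support_concat, List.mem_append, List.mem_singleton] at ht_q
      refine ht_q.resolve_right fun hty => ?_
      have hlen := congrArg Walk.length hqp
      rw [Walk.length_concat, hG.length_eq_dist hq, hG.length_eq_dist hp, ← hty] at hlen
      have := hw v (Walk.start_mem_support _)
      omega
    · rw [hpq, Walk.support_concat]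
      exact List.mem_append_left _ ht_q

theorem IsAcyclic.mem_support_of_forall_dist_le (hG : G.IsAcyclic) {S : Set V}
    (hS : (G.induce S).Preconnected) {r t : V} (ht : t ∈ S)
    (htop : ∀ x ∈ S, G.dist r t ≤ G.dist r x) {v : V} (hv : v ∈ S) {p : G.Walk r v}
    (hp : p.IsPath) : t ∈ p.support := by
  obtain ⟨w, hw⟩ := exists_walk_of_induce_preconnected hS hv ht
  exact hG.mem_support_of_walk_dist_le w (fun x hx => htop x (hw x hx)) hp

/-- Both tops lie on the path from `r` to `v`, the deeper one `t` between `s` and `v`. -/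
theorem IsTree.mem_of_dist_le (hG : G.IsTree) {S T : Set V} (hS : (G.induce S).Preconnected)
    (hT : (G.induce T).Preconnected) {r s t : V} (hs : s ∈ S) (ht : t ∈ T)
    (hs_top : ∀ x ∈ S, G.dist r s ≤ G.dist r x) (ht_top : ∀ x ∈ T, G.dist r t ≤ G.dist r x)
    (hst : G.dist r s ≤ G.dist r t) {v : V} (hvS : v ∈ S) (hvT : v ∈ T) : t ∈ S := by
  obtain ⟨p, hp⟩ := (hG.connected r v).exists_isPath
  have hs_p := hG.isAcyclic.mem_support_of_forall_dist_le hS hs hs_top hvS hp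
  have ht_p := hG.isAcyclic.mem_support_of_forall_dist_le hT ht ht_top hvT hp
  obtain ⟨p₁, p₂, hp₁, hp₂, rfl⟩ := hp.mem_support_iff_exists_append.mp hs_p
  rcases (Walk.mem_support_append_iff _ _).mp ht_p with ht₁ | ht₂
  · obtain ⟨q₁, q₂, hq₁, -, rfl⟩ := hp₁.mem_support_iff_exists_append.mp ht₁
    have hlen := hG.isAcyclic.length_eq_dist hp₁
    rw [Walk.length_append, hG.isAcyclic.length_eq_dist hq₁] at hlen
    obtain rfl : t = s := Walk.eq_of_length_eq_zero (p := q₂) (by omega)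
    exact hs
  · exact hG.isAcyclic.support_subset_of_preconnected hS hs hvS hp₂ t ht₂

end SimpleGraph

section StableMatching

variable {V : Type*} {E : Finset (Finset V)} {pref : V → Finset V → Finset V → Prop}
  {f : Finset V} {rf : V} {M : Finset (Finset V)} {G : SimpleGraph V} {r : V}

theorem disjoint_of_not_covers (hG : G.IsTree) (hne : ∀ e ∈ E, e.Nonempty)
    (hsub : ∀ e ∈ E, (G.induce (e : Set V)).Connected) (hf : f ∈ E) (hrf : rf ∈ f)
    (hrf_top : ∀ v ∈ f, G.dist r rf ≤ G.dist r v)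
    (hrf_far : ∀ e ∈ E, ∀ te ∈ e, (∀ v ∈ e, G.dist r te ≤ G.dist r v) →
      G.dist r te ≤ G.dist r rf)
    (hME : M ⊆ E) (hcov : ¬ Covers M rf) : ∀ e ∈ M, Disjoint e f := by
  intro e he
  refine Finset.disjoint_left.mpr fun v hve hvf => hcov ⟨e, he, ?_⟩
  obtain ⟨te, hte, hte_top⟩ := e.exists_min_image (G.dist r) (hne e (hME he))
  exact hG.mem_of_dist_le (hsub e (hME he)).preconnected (hsub f hf).preconnected hte hrf
    hte_top hrf_top (hrf_far e (hME he) te hte hte_top) hve hvf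

variable [DecidableEq V]

/-- The hypergraph `E` with `X_f ∪ {f}` deleted, in the notation of the paper. -/
noncomputable def eraseWithWorse (E : Finset (Finset V)) (pref : V → Finset V → Finset V → Prop)
    (f : Finset V) (rf : V) : Finset (Finset V) :=
  E.filter fun e => ¬ (e = f ∨ (rf ∈ e ∧ pref rf f e))

theorem eraseWithWorse_ssubset (hf : f ∈ E) : eraseWithWorse E pref f rf ⊂ E :=
  Finset.filter_ssubset.mpr ⟨f, hf, by simp⟩

theorem eq_or_pref_of_notMem_eraseWithWorse {e : Finset V} (he : e ∈ E)
    (he' : e ∉ eraseWithWorse E pref f rf) : e = f ∨ (rf ∈ e ∧ pref rf f e) := by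
  by_contra h
  exact he' (Finset.mem_filter.mpr ⟨he, h⟩)

theorem IsStableMatching.of_eraseWithWorse_of_covers [IsTrans (Finset V) (pref rf)]
    (hrf : rf ∈ f) (hM : IsStableMatching (eraseWithWorse E pref f rf) pref M)
    (hcov : Covers M rf) : IsStableMatching E pref M := by
  obtain ⟨⟨hME, hcard⟩, hstab⟩ := hM
  refine ⟨⟨hME.trans (Finset.filter_subset _ _), hcard⟩, fun e he heM hblock => ?_⟩
  by_cases he' : e ∈ eraseWithWorse E pref f rf
  · exact hstab e he' heM hblock
  obtain ⟨m, hm, hrfm⟩ := hcov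
  have hm_kept := (Finset.mem_filter.mp (hME hm)).2
  -- `rf` prefers `e` to its partner `m`, and ranks `f` at least as high as `e`.
  have hfm : pref rf f m := by
    rcases eq_or_pref_of_notMem_eraseWithWorse he he' with rfl | ⟨hrfe, hfe⟩
    · exact hblock rf hrf m hm hrfm
    · exact _root_.trans hfe (hblock rf hrfe m hm hrfm)
  exact hm_kept (Or.inr ⟨hrfm, hfm⟩)

theorem IsStableMatching.insert_of_eraseWithWorse [Std.Irrefl (pref rf)]
    [IsTrans (Finset V) (pref rf)] (hf : f ∈ E) (hrf : rf ∈ f)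
    (hM : IsStableMatching (eraseWithWorse E pref f rf) pref M)
    (hdisj : ∀ e ∈ M, Disjoint e f) : IsStableMatching E pref (insert f M) := by
  obtain ⟨⟨hME, hcard⟩, hstab⟩ := hM
  refine ⟨⟨Finset.insert_subset hf (hME.trans (Finset.filter_subset _ _)), fun v => ?_⟩,
    fun e he heM hblock => ?_⟩
  · rw [Finset.filter_insert]
    split_ifs with hvf
    · rw [Finset.filter_false_of_mem fun e he hve => Finset.disjoint_left.mp (hdisj e he) hve hvf]
      rfl
    · exact hcard v
  by_cases he' : e ∈ eraseWithWorse E pref f rf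
  · exact hstab e he' (fun h => heM (Finset.mem_insert_of_mem h))
      fun v hv m hm hvm => hblock v hv m (Finset.mem_insert_of_mem hm) hvm
  rcases eq_or_pref_of_notMem_eraseWithWorse he he' with rfl | ⟨hrfe, hfe⟩
  · exact heM (Finset.mem_insert_self _ _)
  · exact irrefl f (_root_.trans hfe (hblock rf hrfe f (Finset.mem_insert_self _ _) hrf))

theorem isStableMatching_of_eraseWithWorse [Std.Irrefl (pref rf)]
    [IsTrans (Finset V) (pref rf)] (hG : G.IsTree) (hne : ∀ e ∈ E, e.Nonempty)
    (hsub : ∀ e ∈ E, (G.induce (e : Set V)).Connected) (hf : f ∈ E) (hrf : rf ∈ f)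
    (hrf_top : ∀ v ∈ f, G.dist r rf ≤ G.dist r v)
    (hrf_far : ∀ e ∈ E, ∀ te ∈ e, (∀ v ∈ e, G.dist r te ≤ G.dist r v) →
      G.dist r te ≤ G.dist r rf)
    (hM : IsStableMatching (eraseWithWorse E pref f rf) pref M) :
    (Covers M rf → IsStableMatching E pref M) ∧
      (¬ Covers M rf → IsStableMatching E pref (insert f M)) :=
  ⟨hM.of_eraseWithWorse_of_covers hrf,
    fun hcov => hM.insert_of_eraseWithWorse hf hrf <| disjoint_of_not_covers hG hne hsub hf hrf
      hrf_top hrf_far (hM.1.1.trans (Finset.filter_subset _ _)) hcov⟩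

end StableMatching

theorem Finset.exists_max_min_image {α β : Type*} [LinearOrder β] {E : Finset (Finset α)}
    (hE : E.Nonempty) (hne : ∀ e ∈ E, e.Nonempty) (d : α → β) :
    ∃ f ∈ E, ∃ rf ∈ f, (∀ v ∈ f, d rf ≤ d v) ∧
      ∀ e ∈ E, ∀ te ∈ e, (∀ v ∈ e, d te ≤ d v) → d te ≤ d rf := by
  -- `choose!` needs `α` to be inhabited.
  have := (hne _ hE.choose_spec).to_type
  choose! top htop_mem htop_le using fun e (he : e ∈ E) => e.exists_min_image d (hne e he)
  obtain ⟨f, hf, hf_max⟩ := E.exists_max_image (fun e => d (top e)) hE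
  exact ⟨f, hf, top f, htop_mem f hf, htop_le f hf,
    fun e he te _ hte_top => (hte_top _ (htop_mem e he)).trans (hf_max e he)⟩

theorem exists_isStableMatching {V : Type*} [DecidableEq V] {G : SimpleGraph V}
    (hG : G.IsTree) (r : V) (pref : V → Finset V → Finset V → Prop)
    [∀ v, Std.Irrefl (pref v)] [∀ v, IsTrans (Finset V) (pref v)] (E : Finset (Finset V))
    (hne : ∀ e ∈ E, e.Nonempty) (hsub : ∀ e ∈ E, (G.induce (e : Set V)).Connected) :
    ∃ M, IsStableMatching E pref M := by
  induction E using Finset.strongInduction with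
  | H E ih =>
    rcases E.eq_empty_or_nonempty with rfl | hE
    · exact ⟨∅, ⟨Finset.empty_subset _, by simp⟩, by simp⟩
    obtain ⟨f, hf, rf, hrf, hrf_top, hrf_far⟩ := E.exists_max_min_image hE hne (G.dist r)
    obtain ⟨M, hM⟩ := ih (eraseWithWorse E pref f rf) (eraseWithWorse_ssubset hf)
      (fun e he => hne e (Finset.filter_subset _ _ he))
      (fun e he => hsub e (Finset.filter_subset _ _ he))
    have hM_ext := isStableMatching_of_eraseWithWorse hG hne hsub hf hrf hrf_top hrf_far hM
    by_cases hcov : Covers M rf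
    · exact ⟨M, hM_ext.1 hcov⟩
    · exact ⟨insert f M, hM_ext.2 hcov⟩

theorem subtree_stable_matching_general {V : Type*} [DecidableEq V]
    (G : SimpleGraph V) (hT : G.IsTree) (r : V)
    (E : Finset (Finset V)) (hne : ∀ e ∈ E, e.Nonempty)
    (hsub : ∀ e ∈ E, (G.induce (e : Set V)).Connected)
    (pref : V → Finset V → Finset V → Prop)
    (hirr : ∀ v e, ¬ pref v e e)
    (htrans : ∀ v, Transitive (pref v)) :
    (∃ M : Finset (Finset V), IsStableMatching E pref M) ∧
    (∀ f ∈ E, ∀ rf ∈ f,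
      (∀ v ∈ f, G.dist r rf ≤ G.dist r v) →
      (∀ e ∈ E, ∀ te ∈ e, (∀ v ∈ e, G.dist r te ≤ G.dist r v) →
        G.dist r te ≤ G.dist r rf) →
      ∀ M : Finset (Finset V),
        IsStableMatching (E.filter (fun e => ¬ (e = f ∨ (rf ∈ e ∧ pref rf f e)))) pref M →
        ((Covers M rf → IsStableMatching E pref M) ∧
         (¬ Covers M rf → IsStableMatching E pref (insert f M)))) := by
  have : ∀ v, Std.Irrefl (pref v) := fun v => ⟨hirr v⟩
  have : ∀ v, IsTrans (Finset V) (pref v) := fun v => ⟨fun _ _ _ => @htrans v _ _ _⟩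
  exact ⟨exists_isStableMatching hT r pref E hne hsub,
    fun f hf rf hrf hrf_top hrf_far M hM =>
      isStableMatching_of_eraseWithWorse hT hne hsub hf hrf hrf_top hrf_far hM⟩

/-- every subtree hypergraph with strict preferences admits a stable matching;
concretely, with `f` a hyperedge whose top vertex `r_f` is farthest from the root and
`X_f` the set of hyperedges containing `r_f` ranked strictly below `f` by `r_f`,
a stable matching `M` of the hypergraph with `X_f ∪ {f}` deleted yields a stable matching
of the original hypergraph: `M` itself if `M` covers `r_f`, and `M ∪ {f}` otherwise. -/
theorem subtree_stable_matching {V : Type*} [Fintype V] [DecidableEq V]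
    (G : SimpleGraph V) (hT : G.IsTree) (r : V)
    (E : Finset (Finset V)) (hne : ∀ e ∈ E, e.Nonempty)
    (hsub : ∀ e ∈ E, (G.induce (e : Set V)).Connected)
    (pref : V → Finset V → Finset V → Prop)
    (hirr : ∀ v e, ¬ pref v e e)
    (htrans : ∀ v, Transitive (pref v))
    (htotal : ∀ v, ∀ e1 ∈ E, ∀ e2 ∈ E, v ∈ e1 → v ∈ e2 → e1 ≠ e2 →
      pref v e1 e2 ∨ pref v e2 e1) :
    (∃ M : Finset (Finset V), IsStableMatching E pref M) ∧
    (∀ f ∈ E, ∀ rf ∈ f,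
      (∀ v ∈ f, G.dist r rf ≤ G.dist r v) →
      (∀ e ∈ E, ∀ te ∈ e, (∀ v ∈ e, G.dist r te ≤ G.dist r v) →
        G.dist r te ≤ G.dist r rf) →
      ∀ M : Finset (Finset V),
        IsStableMatching (E.filter (fun e => ¬ (e = f ∨ (rf ∈ e ∧ pref rf f e)))) pref M →
        ((Covers M rf → IsStableMatching E pref M) ∧
         (¬ Covers M rf → IsStableMatching E pref (insert f M)))) :=
  subtree_stable_matching_general G hT r E hne hsub pref hirr htrans
end

section
/- In an instance of stable hypergraph b-matching on a laminar hypergraph, the greedy algorithm that processes hyperedges in an order compatible with inclusion (minimal first), adds each blocking hyperedge f, and then removes the inclusion-wise maximal elements among the worst matching-hyperedges at oversaturated vertices, terminates with a stable b-matching. In particular, every laminar hypergraph instance of stable hypergraph b-matching admits a stable b-matching. -/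
/-!
The run keeps an invariant: the current set `M` is a `b`-matching of processed hyperedges, and
every processed hyperedge outside `M` is dominated at one of its vertices `v` (`v` is saturated
and prefers all of `M(v)` to it), which is exactly what stability asks at the end.

When a blocking `f` is added, only vertices of `f` that were saturated become oversaturated, by
one. A worst hyperedge at such a vertex is not `f` (else `f` would not block) and, by laminarity
and the processing order, lies inside `f`. The maximal ones among them are pairwise disjoint by
laminarity, and each oversaturated vertex lies in exactly one of them, so removing them restores
every bound while keeping saturated vertices saturated. Removed hyperedges are then dominated at
the vertex where they were worst, and an old dominated hyperedge stays dominated since, at a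
saturated vertex of `f`, blocking forces `f` to be preferred to it.
-/

open scoped Classical

/-- Hyperedge `e ∉ M` blocks `M`. -/
def BlocksBM {V : Type*} [DecidableEq V] (E : Finset (Finset V)) (b : V → ℕ)
    (pref : V → Finset V → Finset V → Prop)
    (M : Finset (Finset V)) (e : Finset V) : Prop :=
  e ∈ E ∧ e ∉ M ∧ ∀ v ∈ e,
    ¬ ((M.filter (fun e' => v ∈ e')).card = b v ∧ ∀ f ∈ M, v ∈ f → pref v f e)

/-- One step of the greedy algorithm: if `f` blocks the current `b`-matching `M`, add `f`,
collect for each oversaturated vertex its worst incident matching hyperedge, and remove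
the inclusion-wise maximal members of that collection. -/
noncomputable def greedyStep {V : Type*} [DecidableEq V]
    (E : Finset (Finset V)) (b : V → ℕ)
    (pref : V → Finset V → Finset V → Prop)
    (M : Finset (Finset V)) (f : Finset V) : Finset (Finset V) :=
  if BlocksBM E b pref M f then
    let N := insert f M
    let X := N.filter (fun e => ∃ v ∈ e,
      b v < (N.filter (fun e' => v ∈ e')).card ∧
      ∀ e' ∈ N, v ∈ e' → e' = e ∨ pref v e' e)
    let Y := X.filter (fun e => ∀ e' ∈ X, ¬ e ⊂ e')
    N \ Y
  else M

open Finset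

theorem Finset.exists_forall_ne_rel_of_total {α : Type*} {r : α → α → Prop}
    (htrans : ∀ ⦃a b c⦄, r a b → r b c → r a c) {s : Finset α}
    (htotal : ∀ a ∈ s, ∀ b ∈ s, a ≠ b → r a b ∨ r b a) (hs : s.Nonempty) :
    ∃ w ∈ s, ∀ e ∈ s, e ≠ w → r e w := by
  induction hs using Finset.Nonempty.cons_induction with
  | singleton a =>
    exact ⟨a, mem_singleton_self a, fun e he hne => absurd (mem_singleton.1 he) hne⟩
  | cons a s ha _ ih =>
    obtain ⟨w, hw, hworst⟩ :=
      ih fun x hx y hy => htotal x (mem_cons_of_mem hx) y (mem_cons_of_mem hy)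
    have haw : a ≠ w := ne_of_mem_of_not_mem hw ha |>.symm
    rcases htotal a (mem_cons_self a s) w (mem_cons_of_mem hw) haw with haw_rel | hwa
    · refine ⟨w, mem_cons_of_mem hw, fun e he hne => ?_⟩
      rcases mem_cons.1 he with rfl | he
      exacts [haw_rel, hworst e he hne]
    · refine ⟨a, mem_cons_self a s, fun e he hne => ?_⟩
      rcases mem_cons.1 he with rfl | he
      · exact absurd rfl hne
      · by_cases hew : e = w
        · exact hew ▸ hwa
        · exact htrans (hworst e he hew) hwa

section
variable {V : Type*} [DecidableEq V]

def IsLaminar (E : Finset (Finset V)) : Prop :=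
  ∀ e₁ ∈ E, ∀ e₂ ∈ E, e₁ ∩ e₂ = ∅ ∨ e₁ ⊆ e₂ ∨ e₂ ⊆ e₁

theorem IsLaminar.subset_or_subset {E : Finset (Finset V)} (hE : IsLaminar E)
    {e₁ e₂ : Finset V} (h₁ : e₁ ∈ E) (h₂ : e₂ ∈ E) {v : V} (hv₁ : v ∈ e₁) (hv₂ : v ∈ e₂) :
    e₁ ⊆ e₂ ∨ e₂ ⊆ e₁ := by
  rcases hE e₁ h₁ e₂ h₂ with h | h | h
  · exact absurd (mem_inter.2 ⟨hv₁, hv₂⟩) (by simp [h])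
  · exact .inl h
  · exact .inr h

theorem IsLaminar.eq_of_maximal {E X : Finset (Finset V)} (hE : IsLaminar E) (hX : X ⊆ E)
    {y₁ y₂ : Finset V} (h₁ : Maximal (· ∈ X) y₁) (h₂ : Maximal (· ∈ X) y₂) {v : V}
    (hv₁ : v ∈ y₁) (hv₂ : v ∈ y₂) : y₁ = y₂ := by
  rcases hE.subset_or_subset (hX h₁.prop) (hX h₂.prop) hv₁ hv₂ with h | h
  · exact h₁.eq_of_le h₂.prop h
  · exact (h₂.eq_of_le h₁.prop h).symm

def degree (M : Finset (Finset V)) (v : V) : ℕ :=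
  (M.filter (fun e => v ∈ e)).card

theorem degree_insert {M : Finset (Finset V)} {f : Finset V} (hf : f ∉ M) (v : V) :
    degree (insert f M) v = degree M v + if v ∈ f then 1 else 0 := by
  unfold degree
  rw [filter_insert]
  split_ifs
  · exact card_insert_of_notMem fun h => hf (mem_filter.1 h).1
  · rfl

theorem degree_sdiff_of_subset {N Y : Finset (Finset V)} (hY : Y ⊆ N) (v : V) :
    degree (N \ Y) v = degree N v - degree Y v := by
  unfold degree
  rw [← card_sdiff_of_subset (filter_subset_filter _ hY)]
  congr 1
  ext e
  simp only [mem_filter, mem_sdiff]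
  tauto

theorem degree_le_one_of_pairwise {Y : Finset (Finset V)} {v : V}
    (hY : ∀ y₁ ∈ Y, ∀ y₂ ∈ Y, v ∈ y₁ → v ∈ y₂ → y₁ = y₂) : degree Y v ≤ 1 :=
  card_le_one.2 fun y₁ h₁ y₂ h₂ =>
    hY y₁ (mem_filter.1 h₁).1 y₂ (mem_filter.1 h₂).1 (mem_filter.1 h₁).2 (mem_filter.1 h₂).2

def PrefTotalOn (E : Finset (Finset V)) (pref : V → Finset V → Finset V → Prop) : Prop :=
  ∀ v, ∀ e₁ ∈ E, ∀ e₂ ∈ E, v ∈ e₁ → v ∈ e₂ → e₁ ≠ e₂ → pref v e₁ e₂ ∨ pref v e₂ e₁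

def Dominates (b : V → ℕ) (pref : V → Finset V → Finset V → Prop)
    (M : Finset (Finset V)) (v : V) (g : Finset V) : Prop :=
  degree M v = b v ∧ ∀ e ∈ M, v ∈ e → pref v e g

theorem blocksBM_iff {E : Finset (Finset V)} {b : V → ℕ} {pref : V → Finset V → Finset V → Prop}
    {M : Finset (Finset V)} {g : Finset V} :
    BlocksBM E b pref M g ↔ g ∈ E ∧ g ∉ M ∧ ∀ v ∈ g, ¬ Dominates b pref M v g :=
  Iff.rfl

-- Applied to `insert f M`, these are the sets `X_f` and `Y_f` of the algorithm.
noncomputable def worstAtOversaturated (b : V → ℕ) (pref : V → Finset V → Finset V → Prop)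
    (N : Finset (Finset V)) : Finset (Finset V) :=
  N.filter fun e => ∃ v ∈ e, b v < degree N v ∧ ∀ e' ∈ N, v ∈ e' → e' = e ∨ pref v e' e

noncomputable def evicted (b : V → ℕ) (pref : V → Finset V → Finset V → Prop)
    (N : Finset (Finset V)) : Finset (Finset V) :=
  (worstAtOversaturated b pref N).filter (Maximal (· ∈ worstAtOversaturated b pref N))

theorem mem_evicted {b : V → ℕ} {pref : V → Finset V → Finset V → Prop}
    {N : Finset (Finset V)} {y : Finset V} :
    y ∈ evicted b pref N ↔ Maximal (· ∈ worstAtOversaturated b pref N) y :=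
  mem_filter.trans (and_iff_right_of_imp Maximal.prop)

theorem evicted_subset (b : V → ℕ) (pref : V → Finset V → Finset V → Prop)
    (N : Finset (Finset V)) : evicted b pref N ⊆ N :=
  (filter_subset _ _).trans (filter_subset _ _)

theorem greedyStep_of_blocks {E : Finset (Finset V)} {b : V → ℕ}
    {pref : V → Finset V → Finset V → Prop} {M : Finset (Finset V)} {f : Finset V}
    (h : BlocksBM E b pref M f) :
    greedyStep E b pref M f = insert f M \ evicted b pref (insert f M) := by
  rw [greedyStep, if_pos h]
  dsimp only
  congr 1
  refine filter_congr fun e he => ?_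
  rw [maximal_iff_forall_gt]
  exact ⟨fun h => ⟨he, fun y hey hy => h y hy hey⟩, fun h y hy hey => h.2 hey hy⟩

theorem degree_evicted_le_one {E N : Finset (Finset V)} (hE : IsLaminar E) (hN : N ⊆ E)
    (b : V → ℕ) (pref : V → Finset V → Finset V → Prop) (v : V) :
    degree (evicted b pref N) v ≤ 1 :=
  degree_le_one_of_pairwise fun _ h₁ _ h₂ =>
    hE.eq_of_maximal ((filter_subset _ _).trans hN) (mem_evicted.1 h₁) (mem_evicted.1 h₂)

theorem degree_evicted_eq_one {E N : Finset (Finset V)} (hE : IsLaminar E) (hN : N ⊆ E)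
    {b : V → ℕ} {pref : V → Finset V → Finset V → Prop}
    (htrans : ∀ v ⦃e₁ e₂ e₃⦄, pref v e₁ e₂ → pref v e₂ e₃ → pref v e₁ e₃)
    (htotal : PrefTotalOn E pref)
    {v : V} (hv : b v < degree N v) : degree (evicted b pref N) v = 1 := by
  have hne : (N.filter fun e => v ∈ e).Nonempty := card_pos.1 (by unfold degree at hv; omega)
  obtain ⟨w, hw, hworst⟩ := exists_forall_ne_rel_of_total (htrans v)
    (fun e₁ h₁ e₂ h₂ => htotal v e₁ (hN (mem_filter.1 h₁).1) e₂ (hN (mem_filter.1 h₂).1)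
      (mem_filter.1 h₁).2 (mem_filter.1 h₂).2) hne
  obtain ⟨hwN, hvw⟩ := mem_filter.1 hw
  have hwX : w ∈ worstAtOversaturated b pref N :=
    mem_filter.2 ⟨hwN, v, hvw, hv, fun e he hve =>
      or_iff_not_imp_left.2 (hworst e (mem_filter.2 ⟨he, hve⟩))⟩
  obtain ⟨y, hwy, hy⟩ := exists_le_maximal _ hwX
  exact le_antisymm (degree_evicted_le_one hE hN b pref v)
    (card_pos.2 ⟨y, mem_filter.2 ⟨mem_evicted.2 hy, hwy hvw⟩⟩)

section BlockingStep

variable {E M : Finset (Finset V)} {b : V → ℕ} {pref : V → Finset V → Finset V → Prop}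
  {f : Finset V}

theorem oversaturated_insert_iff (hdeg : ∀ v, degree M v ≤ b v) (hf : f ∉ M) {v : V} :
    b v < degree (insert f M) v ↔ v ∈ f ∧ degree M v = b v := by
  have := hdeg v
  by_cases hv : v ∈ f <;> simp only [degree_insert hf, hv, if_true, if_false, true_and,
    false_and, iff_false, not_lt] <;> omega

theorem mem_of_mem_worstAtOversaturated (hdeg : ∀ v, degree M v ≤ b v)
    (hblock : BlocksBM E b pref M f) {e : Finset V}
    (he : e ∈ worstAtOversaturated b pref (insert f M)) : e ∈ M := by
  obtain ⟨heN, v, hve, hover, hworst⟩ := mem_filter.1 he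
  refine (mem_insert.1 heN).resolve_left ?_
  rintro rfl
  obtain ⟨-, hfM, hnot⟩ := blocksBM_iff.1 hblock
  -- `e` is both the worst hyperedge at `v` and, by blocking, better than some member of `M(v)`
  exact hnot v hve ⟨((oversaturated_insert_iff hdeg hfM).1 hover).2, fun e' he' hve' =>
    (hworst e' (mem_insert_of_mem he') hve').resolve_left (ne_of_mem_of_not_mem he' hfM)⟩

theorem subset_of_mem_worstAtOversaturated (hdeg : ∀ v, degree M v ≤ b v)
    (hblock : BlocksBM E b pref M f) (hME : M ⊆ E) (hlam : IsLaminar E)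
    (hmax : ∀ e ∈ M, ¬ f ⊂ e) {e : Finset V}
    (he : e ∈ worstAtOversaturated b pref (insert f M)) : e ⊆ f := by
  have heM := mem_of_mem_worstAtOversaturated hdeg hblock he
  obtain ⟨v, hve, hover, -⟩ := (mem_filter.1 he).2
  have hvf := ((oversaturated_insert_iff hdeg hblock.2.1).1 hover).1
  refine (hlam.subset_or_subset (hME heM) hblock.1 hve hvf).elim id fun hfe => ?_
  by_contra hef
  exact hmax e heM ⟨hfe, hef⟩

theorem self_mem_greedyStep_of_blocks (hdeg : ∀ v, degree M v ≤ b v)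
    (hblock : BlocksBM E b pref M f) : f ∈ greedyStep E b pref M f := by
  rw [greedyStep_of_blocks hblock]
  refine mem_sdiff.2 ⟨mem_insert_self f M, fun hf => hblock.2.1 ?_⟩
  exact mem_of_mem_worstAtOversaturated hdeg hblock (mem_evicted.1 hf).prop

theorem degree_greedyStep_of_oversaturated (hdeg : ∀ v, degree M v ≤ b v)
    (hblock : BlocksBM E b pref M f) (hME : M ⊆ E) (hlam : IsLaminar E)
    (htrans : ∀ v ⦃e₁ e₂ e₃⦄, pref v e₁ e₂ → pref v e₂ e₃ → pref v e₁ e₃)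
    (htotal : PrefTotalOn E pref)
    {v : V} (hv : b v < degree (insert f M) v) :
    degree (greedyStep E b pref M f) v = b v := by
  have hNE : insert f M ⊆ E := insert_subset hblock.1 hME
  obtain ⟨hvf, hsat⟩ := (oversaturated_insert_iff hdeg hblock.2.1).1 hv
  rw [greedyStep_of_blocks hblock, degree_sdiff_of_subset (evicted_subset _ _ _),
    degree_evicted_eq_one hlam hNE htrans htotal hv, degree_insert hblock.2.1, if_pos hvf, hsat]
  rfl

theorem degree_greedyStep_le (hdeg : ∀ v, degree M v ≤ b v)
    (hblock : BlocksBM E b pref M f) (hME : M ⊆ E) (hlam : IsLaminar E)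
    (htrans : ∀ v ⦃e₁ e₂ e₃⦄, pref v e₁ e₂ → pref v e₂ e₃ → pref v e₁ e₃)
    (htotal : PrefTotalOn E pref)
    (v : V) : degree (greedyStep E b pref M f) v ≤ b v := by
  by_cases hv : b v < degree (insert f M) v
  · exact (degree_greedyStep_of_oversaturated hdeg hblock hME hlam htrans htotal hv).le
  · rw [greedyStep_of_blocks hblock, degree_sdiff_of_subset (evicted_subset _ _ _)]
    omega

theorem degree_greedyStep_of_saturated (hdeg : ∀ v, degree M v ≤ b v)
    (hblock : BlocksBM E b pref M f) (hME : M ⊆ E) (hlam : IsLaminar E)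
    (hmax : ∀ e ∈ M, ¬ f ⊂ e)
    (htrans : ∀ v ⦃e₁ e₂ e₃⦄, pref v e₁ e₂ → pref v e₂ e₃ → pref v e₁ e₃)
    (htotal : PrefTotalOn E pref)
    {v : V} (hv : degree M v = b v) : degree (greedyStep E b pref M f) v = b v := by
  by_cases hvf : v ∈ f
  · exact degree_greedyStep_of_oversaturated hdeg hblock hME hlam htrans htotal
      ((oversaturated_insert_iff hdeg hblock.2.1).2 ⟨hvf, hv⟩)
  · have hY : degree (evicted b pref (insert f M)) v = 0 :=
      card_eq_zero.2 <| filter_eq_empty_iff.2 fun y hy hvy => hvf <|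
        subset_of_mem_worstAtOversaturated hdeg hblock hME hlam hmax (mem_evicted.1 hy).prop hvy
    rw [greedyStep_of_blocks hblock, degree_sdiff_of_subset (evicted_subset _ _ _), hY,
      degree_insert hblock.2.1, if_neg hvf]
    exact hv

theorem Dominates.of_subset_insert {M' : Finset (Finset V)} {v : V} {g : Finset V}
    (h : Dominates b pref M v g) (hsat : degree M' v = b v) (hM' : M' ⊆ insert f M)
    (hf : v ∈ f → pref v f g) : Dominates b pref M' v g := by
  refine ⟨hsat, fun e he hve => ?_⟩
  rcases mem_insert.1 (hM' he) with rfl | heM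
  exacts [hf hve, h.2 e heM hve]

theorem pref_of_blocks (hblock : BlocksBM E b pref M f) (hME : M ⊆ E)
    (htrans : ∀ v ⦃e₁ e₂ e₃⦄, pref v e₁ e₂ → pref v e₂ e₃ → pref v e₁ e₃)
    (htotal : PrefTotalOn E pref)
    {v : V} {g : Finset V} (hg : Dominates b pref M v g) (hv : v ∈ f) : pref v f g := by
  obtain ⟨hfE, hfM, hnot⟩ := blocksBM_iff.1 hblock
  obtain ⟨e, heM, hve, hef⟩ : ∃ e ∈ M, v ∈ e ∧ ¬ pref v e f := by
    simpa [Dominates, hg.1] using hnot v hv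
  have hfe := (htotal v e (hME heM) f hfE hve hv (ne_of_mem_of_not_mem heM hfM)).resolve_left hef
  exact htrans v hfe (hg.2 e heM hve)

theorem dominates_greedyStep_of_mem_evicted (hdeg : ∀ v, degree M v ≤ b v)
    (hblock : BlocksBM E b pref M f) (hME : M ⊆ E) (hlam : IsLaminar E)
    (htrans : ∀ v ⦃e₁ e₂ e₃⦄, pref v e₁ e₂ → pref v e₂ e₃ → pref v e₁ e₃)
    (htotal : PrefTotalOn E pref)
    {g : Finset V} (hg : g ∈ evicted b pref (insert f M)) :
    ∃ u ∈ g, Dominates b pref (greedyStep E b pref M f) u g := by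
  obtain ⟨-, u, hu, hover, hworst⟩ := mem_filter.1 (mem_evicted.1 hg).prop
  refine ⟨u, hu, degree_greedyStep_of_oversaturated hdeg hblock hME hlam htrans htotal hover,
    fun e he hue => ?_⟩
  rw [greedyStep_of_blocks hblock] at he
  obtain ⟨heN, heY⟩ := mem_sdiff.1 he
  exact (hworst e heN hue).resolve_left fun heg => heY (heg ▸ hg)

end BlockingStep

def IsStableBMatching (E : Finset (Finset V)) (b : V → ℕ)
    (pref : V → Finset V → Finset V → Prop) (M : Finset (Finset V)) : Prop :=
  M ⊆ E ∧ (∀ v, degree M v ≤ b v) ∧ ∀ e, ¬ BlocksBM E b pref M e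

structure GreedyInvariant (E : Finset (Finset V)) (b : V → ℕ)
    (pref : V → Finset V → Finset V → Prop) (P M : Finset (Finset V)) : Prop where
  subset_edges : M ⊆ E
  subset_processed : M ⊆ P
  degree_le : ∀ v, degree M v ≤ b v
  dominated : ∀ g ∈ P, g ∉ M → ∃ v ∈ g, Dominates b pref M v g

namespace GreedyInvariant

variable {E P M : Finset (Finset V)} {b : V → ℕ} {pref : V → Finset V → Finset V → Prop}
  {f : Finset V}

theorem empty : GreedyInvariant E b pref ∅ ∅ :=
  ⟨empty_subset _, empty_subset _, fun _ => Nat.zero_le _, fun _ h => absurd h (notMem_empty _)⟩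

theorem insert_of_not_blocks (hinv : GreedyInvariant E b pref P M) (hfE : f ∈ E)
    (hblock : ¬ BlocksBM E b pref M f) : GreedyInvariant E b pref (insert f P) M := by
  refine ⟨hinv.subset_edges, hinv.subset_processed.trans (subset_insert _ _), hinv.degree_le,
    fun g hg hgM => ?_⟩
  rcases mem_insert.1 hg with rfl | hgP
  · simpa [blocksBM_iff, hfE, hgM] using hblock
  · exact hinv.dominated g hgP hgM

theorem insert_of_blocks (hinv : GreedyInvariant E b pref P M) (hlam : IsLaminar E)
    (htrans : ∀ v ⦃e₁ e₂ e₃⦄, pref v e₁ e₂ → pref v e₂ e₃ → pref v e₁ e₃)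
    (htotal : PrefTotalOn E pref)
    (hmax : ∀ e ∈ P, ¬ f ⊂ e) (hblock : BlocksBM E b pref M f) :
    GreedyInvariant E b pref (insert f P) (greedyStep E b pref M f) := by
  obtain ⟨hME, hMP, hdeg, hdom⟩ := hinv
  have hmaxM : ∀ e ∈ M, ¬ f ⊂ e := fun e he => hmax e (hMP he)
  have hstep : greedyStep E b pref M f ⊆ insert f M := by
    rw [greedyStep_of_blocks hblock]; exact sdiff_subset
  refine ⟨hstep.trans (insert_subset hblock.1 hME), hstep.trans (insert_subset_insert f hMP),
    degree_greedyStep_le hdeg hblock hME hlam htrans htotal, fun g hg hgM' => ?_⟩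
  rcases mem_insert.1 hg with rfl | hgP
  · exact absurd (self_mem_greedyStep_of_blocks hdeg hblock) hgM'
  by_cases hgM : g ∈ M
  · have hgY : g ∈ evicted b pref (insert f M) := by
      by_contra hgY
      rw [greedyStep_of_blocks hblock] at hgM'
      exact hgM' (mem_sdiff.2 ⟨mem_insert_of_mem hgM, hgY⟩)
    exact dominates_greedyStep_of_mem_evicted hdeg hblock hME hlam htrans htotal hgY
  · obtain ⟨v, hvg, hv⟩ := hdom g hgP hgM
    exact ⟨v, hvg, hv.of_subset_insert
      (degree_greedyStep_of_saturated hdeg hblock hME hlam hmaxM htrans htotal hv.1) hstep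
      (pref_of_blocks hblock hME htrans htotal hv)⟩

theorem greedyStep (hinv : GreedyInvariant E b pref P M) (hlam : IsLaminar E)
    (htrans : ∀ v ⦃e₁ e₂ e₃⦄, pref v e₁ e₂ → pref v e₂ e₃ → pref v e₁ e₃)
    (htotal : PrefTotalOn E pref)
    (hfE : f ∈ E) (hmax : ∀ e ∈ P, ¬ f ⊂ e) :
    GreedyInvariant E b pref (insert f P) (_root_.greedyStep E b pref M f) := by
  by_cases hblock : BlocksBM E b pref M f
  · exact hinv.insert_of_blocks hlam htrans htotal hmax hblock
  · rw [_root_.greedyStep, if_neg hblock]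
    exact hinv.insert_of_not_blocks hfE hblock

theorem foldl (hinv : GreedyInvariant E b pref P M) (hlam : IsLaminar E)
    (htrans : ∀ v ⦃e₁ e₂ e₃⦄, pref v e₁ e₂ → pref v e₂ e₃ → pref v e₁ e₃)
    (htotal : PrefTotalOn E pref)
    {L : List (Finset V)} (hLE : ∀ e ∈ L, e ∈ E) (hPL : ∀ p ∈ P, ∀ e ∈ L, ¬ e ⊂ p)
    (horder : L.Pairwise fun e₁ e₂ => ¬ e₂ ⊂ e₁) :
    GreedyInvariant E b pref (P ∪ L.toFinset) (L.foldl (_root_.greedyStep E b pref) M) := by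
  induction L generalizing P M with
  | nil => simpa using hinv
  | cons f L ih =>
    obtain ⟨hfL, horder⟩ := List.pairwise_cons.1 horder
    have hstep := hinv.greedyStep hlam htrans htotal (hLE f List.mem_cons_self)
      fun p hp => hPL p hp f List.mem_cons_self
    have := ih hstep (fun e he => hLE e (List.mem_cons_of_mem f he)) (fun p hp e he => ?_) horder
    · rwa [List.foldl_cons, List.toFinset_cons, union_insert, ← insert_union]
    · rcases mem_insert.1 hp with rfl | hp
      exacts [hfL e he, hPL p hp e (List.mem_cons_of_mem f he)]

theorem isStableBMatching (hinv : GreedyInvariant E b pref P M) (hEP : E ⊆ P) :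
    IsStableBMatching E b pref M :=
  ⟨hinv.subset_edges, hinv.degree_le, fun _ ⟨heE, heM, hnot⟩ =>
    let ⟨v, hve, hv⟩ := hinv.dominated _ (hEP heE) heM
    hnot v hve hv⟩

end GreedyInvariant

end

theorem laminar_greedy_stable_general {V : Type*} [DecidableEq V]
    (E : Finset (Finset V)) (b : V → ℕ)
    (pref : V → Finset V → Finset V → Prop)
    (htrans : ∀ v, Transitive (pref v))
    (htotal : ∀ v, ∀ e1 ∈ E, ∀ e2 ∈ E, v ∈ e1 → v ∈ e2 → e1 ≠ e2 →
      pref v e1 e2 ∨ pref v e2 e1)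
    (hlam : ∀ e1 ∈ E, ∀ e2 ∈ E, e1 ∩ e2 = ∅ ∨ e1 ⊆ e2 ∨ e2 ⊆ e1)
    (L : List (Finset V))
    (henum : ∀ e, e ∈ E ↔ e ∈ L)
    -- order compatible with inclusion: an edge is never strictly contained in an earlier one
    (horder : L.Pairwise (fun e1 e2 => ¬ e2 ⊂ e1)) :
    (let M := L.foldl (greedyStep E b pref) ∅
     M ⊆ E ∧ (∀ v, (M.filter (fun e' => v ∈ e')).card ≤ b v) ∧
       ∀ e, ¬ BlocksBM E b pref M e) ∧
    (∃ M : Finset (Finset V), M ⊆ E ∧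
      (∀ v, (M.filter (fun e' => v ∈ e')).card ≤ b v) ∧
      ∀ e, ¬ BlocksBM E b pref M e) := by
  have hinv : GreedyInvariant E b pref L.toFinset (L.foldl (greedyStep E b pref) ∅) := by
    simpa using GreedyInvariant.empty.foldl hlam htrans htotal (fun e => (henum e).2)
      (by simp) horder
  have hstable : IsStableBMatching E b pref (L.foldl (greedyStep E b pref) ∅) :=
    hinv.isStableBMatching fun e he => List.mem_toFinset.2 ((henum e).1 he)
  exact ⟨hstable, _, hstable⟩

/-- on a laminar hypergraph, the greedy algorithm processing hyperedges in an
order compatible with inclusion (minimal first) terminates with a stable `b`-matching; in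
particular every laminar instance admits a stable `b`-matching. -/
theorem laminar_greedy_stable {V : Type*} [DecidableEq V]
    (E : Finset (Finset V)) (b : V → ℕ)
    (pref : V → Finset V → Finset V → Prop)
    (hirr : ∀ v e, ¬ pref v e e)
    (htrans : ∀ v, Transitive (pref v))
    (htotal : ∀ v, ∀ e1 ∈ E, ∀ e2 ∈ E, v ∈ e1 → v ∈ e2 → e1 ≠ e2 →
      pref v e1 e2 ∨ pref v e2 e1)
    (hlam : ∀ e1 ∈ E, ∀ e2 ∈ E, e1 ∩ e2 = ∅ ∨ e1 ⊆ e2 ∨ e2 ⊆ e1)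
    (L : List (Finset V)) (hnodup : L.Nodup)
    (henum : ∀ e, e ∈ E ↔ e ∈ L)
    -- order compatible with inclusion: an edge is never strictly contained in an earlier one
    (horder : L.Pairwise (fun e1 e2 => ¬ e2 ⊂ e1)) :
    (let M := L.foldl (greedyStep E b pref) ∅
     M ⊆ E ∧ (∀ v, (M.filter (fun e' => v ∈ e')).card ≤ b v) ∧
       ∀ e, ¬ BlocksBM E b pref M e) ∧
    (∃ M : Finset (Finset V), M ⊆ E ∧
      (∀ v, (M.filter (fun e' => v ∈ e')).card ≤ b v) ∧
      ∀ e, ¬ BlocksBM E b pref M e) :=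
  laminar_greedy_stable_general E b pref htrans htotal hlam L henum horder
end
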